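/- arXiv:1008.2571 — 10 statements merged into one kernel-verified Lean document; each statement's English description precedes it below -/
import Mathlib

section
/- For real numbers a > a_c > 0, N > 0, p > 0 and λ ∈ [0,1], define R(p,λ) = log₂( ((N + a_c·p + a·p)(N + a_c·λ·p + a·λ·p)) / ((N + a_c·p + a·λ·p)(N + a·λ·p + a_c·p)) ). Then for any λ with 0 ≤ λ < a_c/a, the choice p(λ) = N(a - a_c)/((a + a_c)(a_c - a·λ)) satisfies R(p(λ), λ) = log₂( (a + a_c)² / (4·a·a_c) ). -/
theorem stmt_0 (a ac N lam : ℝ) (hac : 0 < ac) (ha : ac < a) (hN : 0 < N)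
    (hlam0 : 0 ≤ lam) (hlam : lam < ac / a) :
    let p := N * (a - ac) / ((a + ac) * (ac - a * lam))
    Real.logb 2 (((N + ac * p + a * p) * (N + ac * lam * p + a * lam * p)) /
        ((N + ac * p + a * lam * p) * (N + a * lam * p + ac * p))) =
      Real.logb 2 ((a + ac) ^ 2 / (4 * a * ac)) := by
  intro p
  have ha0 : 0 < a := hac.trans ha
  have hd : 0 < ac - a * lam := by
    have := (lt_div_iff₀ ha0).mp hlam
    nlinarith
  have hsum : (0:ℝ) < a + ac := by linarith
  have hden : (a + ac) * (ac - a * lam) ≠ 0 := by positivity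
  have hp : p = N * (a - ac) / ((a + ac) * (ac - a * lam)) := rfl
  have hlam1 : lam < 1 := by
    have h := (lt_div_iff₀ ha0).mp hlam
    nlinarith
  have e1 : N + ac * p + a * p =
      N * (a + ac) * a * (1 - lam) / ((a + ac) * (ac - a * lam)) := by
    rw [hp]; field_simp; ring
  have e2 : N + ac * lam * p + a * lam * p =
      N * (a + ac) * ac * (1 - lam) / ((a + ac) * (ac - a * lam)) := by
    rw [hp, eq_div_iff hden]
    have hc : N * (a - ac) / ((a + ac) * (ac - a * lam)) * ((a + ac) * (ac - a * lam)) = N * (a - ac) := div_mul_cancel₀ _ hden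
    linear_combination (ac * lam + a * lam) * hc
  have e3 : N + ac * p + a * lam * p =
      2 * N * a * ac * (1 - lam) / ((a + ac) * (ac - a * lam)) := by
    rw [hp]; field_simp; ring
  have e4 : N + a * lam * p + ac * p =
      2 * N * a * ac * (1 - lam) / ((a + ac) * (ac - a * lam)) := by
    rw [hp]; field_simp; ring
  have h1 : (1:ℝ) - lam ≠ 0 := by nlinarith
  congr 1
  rw [e1, e2, e3, e4]
  field_simp
  ring
end

section
/- For real numbers a > a_c > 0, N > 0, define R(p,λ) = log₂( ((N + (a_c + a)p)(N + (a_c + a)λp)) / ((N + a_c·p + a·λ·p)(N + a·λ·p + a_c·p)) ) for p > 0 and λ ∈ [0,1]. Then for all p > 0 and λ ∈ [0,1], R(p,λ) ≤ log₂( (a + a_c)² / (4·a·a_c) ). -/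
theorem stmt_1 (a ac N : ℝ) (hac : 0 < ac) (ha : ac < a) (hN : 0 < N) :
    ∀ p lam : ℝ, 0 < p → 0 ≤ lam → lam ≤ 1 →
      Real.logb 2 (((N + (ac + a) * p) * (N + (ac + a) * lam * p)) /
          ((N + ac * p + a * lam * p) * (N + a * lam * p + ac * p))) ≤
        Real.logb 2 ((a + ac) ^ 2 / (4 * a * ac)) := by
  intro p lam hp hl0 hl1
  have ha0 : 0 < a := hac.trans ha
  have hX : 0 < N + (ac + a) * p := by positivity
  have hY : 0 < N + (ac + a) * lam * p := by positivity
  have hD : 0 < N + ac * p + a * lam * p := by positivity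
  have hD2 : 0 < N + a * lam * p + ac * p := by positivity
  have hfrac : 0 < ((N + (ac + a) * p) * (N + (ac + a) * lam * p)) /
      ((N + ac * p + a * lam * p) * (N + a * lam * p + ac * p)) := by positivity
  have key : ((N + (ac + a) * p) * (N + (ac + a) * lam * p)) /
      ((N + ac * p + a * lam * p) * (N + a * lam * p + ac * p)) ≤
      (a + ac) ^ 2 / (4 * a * ac) := by
    rw [div_le_div_iff₀ (by positivity) (by positivity)]
    nlinarith [sq_nonneg (ac * (N + (ac + a) * p) - a * (N + (ac + a) * lam * p)),
    mul_pos hD hD2, sq_nonneg (a - ac), mul_pos hX hY]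
  gcongr Real.logb 2 ?_ <;> first | norm_num | exact hfrac | exact key
end

section
/- For real numbers a > a_c > 0, N > 0, p > 0 and λ ∈ [0,1], define R(p,λ) = log₂( ((N + (a+a_c)p)(N + (a+a_c)λp)) / ((N + a_c·p + a·λ·p)(N + a·λ·p + a_c·p)) ). Then R(p,0) is strictly increasing in p on the interval (0, N(a − a_c)/(a_c(a + a_c))). -/
theorem stmt_3 (a ac N : ℝ) (hac : 0 < ac) (ha : ac < a) (hN : 0 < N) :
    StrictMonoOn
      (fun p : ℝ =>
        Real.logb 2 (((N + (a + ac) * p) * (N + (a + ac) * 0 * p)) /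
          ((N + ac * p + a * 0 * p) * (N + a * 0 * p + ac * p))))
      (Set.Ioo 0 (N * (a - ac) / (ac * (a + ac)))) := by
  intro x hx y hy hxy
  obtain ⟨hx0, hxB⟩ := hx
  obtain ⟨hy0, hyB⟩ := hy
  have haac : 0 < a + ac := by linarith
  have hden : 0 < ac * (a + ac) := mul_pos hac haac
  have hxB' : ac * (a + ac) * x < N * (a - ac) := by
    have := (lt_div_iff₀ hden).mp hxB; nlinarith [this]
  have hyB' : ac * (a + ac) * y < N * (a - ac) := by
    have := (lt_div_iff₀ hden).mp hyB; nlinarith [this]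
  simp only
  have hdx : 0 < (N + ac * x + a * 0 * x) * (N + a * 0 * x + ac * x) := by
    nlinarith [mul_pos hac hx0]
  have hdy : 0 < (N + ac * y + a * 0 * y) * (N + a * 0 * y + ac * y) := by
    nlinarith [mul_pos hac hy0]
  have hu : 0 < ac * (a + ac) * x := mul_pos hden hx0
  have hv : 0 < ac * (a + ac) * y := mul_pos hden hy0
  have posbr : 0 < N ^ 2 * (a - ac) - ac ^ 2 * N * (x + y) - (a + ac) * ac ^ 2 * x * y := by
    have h1 : 0 < (N * (a - ac) - ac * (a + ac) * x) * (N * (a - ac) - ac * (a + ac) * y) :=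
      mul_pos (sub_pos.mpr hxB') (sub_pos.mpr hyB')
    have h2 : 0 < (ac * (a + ac) * x) * (N * (a - ac) - ac * (a + ac) * y) :=
      mul_pos hu (sub_pos.mpr hyB')
    have h3 : 0 < (ac * (a + ac) * y) * (N * (a - ac) - ac * (a + ac) * x) :=
      mul_pos hv (sub_pos.mpr hxB')
    have h4 : 0 < ac * N * (N * (a - ac) - ac * (a + ac) * x) :=
      mul_pos (mul_pos hac hN) (sub_pos.mpr hxB')
    have h5 : 0 < ac * N * (N * (a - ac) - ac * (a + ac) * y) :=
      mul_pos (mul_pos hac hN) (sub_pos.mpr hyB')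
    have key : (a + ac) * (N ^ 2 * (a - ac) - ac ^ 2 * N * (x + y) - (a + ac) * ac ^ 2 * x * y)
        = ac * N * (N * (a - ac) - ac * (a + ac) * x)
          + ac * N * (N * (a - ac) - ac * (a + ac) * y)
          + ((N * (a - ac) - ac * (a + ac) * x) * (N * (a - ac) - ac * (a + ac) * y)
            + (ac * (a + ac) * x) * (N * (a - ac) - ac * (a + ac) * y)
            + (ac * (a + ac) * y) * (N * (a - ac) - ac * (a + ac) * x)) := by
      ring
    have hB : 0 < (a + ac) * (N ^ 2 * (a - ac) - ac ^ 2 * N * (x + y) - (a + ac) * ac ^ 2 * x * y) := by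
      rw [key]; positivity
    by_contra hcon
    push_neg at hcon
    nlinarith [hB, mul_nonpos_of_nonneg_of_nonpos haac.le hcon]
  apply Real.logb_lt_logb (by norm_num)
  · have h1 : 0 < N + (a + ac) * x := by nlinarith [mul_pos haac hx0]
    have h2 : 0 < N + (a + ac) * 0 * x := by nlinarith
    exact div_pos (mul_pos h1 h2) hdx
  · rw [div_lt_div_iff₀ hdx hdy]
    nlinarith [mul_pos (mul_pos hN (sub_pos.mpr hxy)) posbr]
end

section
/- For real numbers a > a_c > 0, N > 0 and fixed p > 0, the function λ ↦ R(p,λ) with R(p,λ) = log₂( ((N + (a+a_c)p)(N + (a+a_c)λp)) / ((N + a_c p + a λ p)(N + a λ p + a_c p)) ) is strictly decreasing on [0,1] whenever p < N(a − a_c)/(a_c(a + a_c)). -/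
theorem stmt_4 (a ac N p : ℝ) (hac : 0 < ac) (ha : ac < a) (hN : 0 < N)
    (hp : 0 < p) (hpP : p < N * (a - ac) / (ac * (a + ac))) :
    StrictAntiOn
      (fun lam : ℝ =>
        Real.logb 2 (((N + (a + ac) * p) * (N + (a + ac) * lam * p)) /
          ((N + ac * p + a * lam * p) * (N + a * lam * p + ac * p))))
      (Set.Icc 0 1) := by
  have hP : p * (ac * (a + ac)) < N * (a - ac) := by
    rw [lt_div_iff₀ (by nlinarith)] at hpP
    linarith
  intro x hx y hy hxy
  obtain ⟨hx0, hx1⟩ := hx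
  obtain ⟨hy0, hy1⟩ := hy
  have ha0 : 0 < a := hac.trans ha
  have hDx : 0 < N + ac * p + a * x * p := by positivity
  have hDy : 0 < N + ac * p + a * y * p := by positivity
  have hDx' : 0 < N + a * x * p + ac * p := by positivity
  have hDy' : 0 < N + a * y * p + ac * p := by positivity
  have hNumx : 0 < N + (a + ac) * x * p := by positivity
  have hNumy : 0 < N + (a + ac) * y * p := by positivity
  have hC : 0 < N + (a + ac) * p := by positivity
  simp only
  apply Real.logb_lt_logb one_lt_two
  · positivity
  · rw [div_lt_div_iff₀ (by positivity) (by positivity)]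
    have hyx : 0 < y - x := by linarith
    have hB : 0 < -((a+ac)*p)*(N+ac*p)^2 + 2*a*p*N*(N+ac*p)
        + a^2*p^2*(N*(x+y)+(a+ac)*p*x*y) := by
      nlinarith [mul_lt_mul_of_pos_left hP (mul_pos hp hN),
        mul_lt_mul_of_pos_left hP (mul_pos (mul_pos hp hp) hac),
        mul_nonneg (mul_nonneg (mul_pos (mul_pos ha0 ha0) (mul_pos hp hp)).le hN.le) (by linarith : (0:ℝ) ≤ x + y),
        mul_nonneg (mul_nonneg (mul_nonneg (mul_pos (mul_pos ha0 ha0) (by linarith : (0:ℝ) < a + ac)).le (by positivity : (0:ℝ) ≤ p^3)) hx0) hy0]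
    have hkey : (N + (a + ac) * y * p) * ((N + ac * p + a * x * p) * (N + a * x * p + ac * p)) <
        (N + (a + ac) * x * p) * ((N + ac * p + a * y * p) * (N + a * y * p + ac * p)) := by
      nlinarith [mul_pos hyx hB]
    nlinarith [mul_lt_mul_of_pos_left hkey hC]
end

section
/- For a > a_c > 0, N > 0 and P > 0, the single-user secrecy rate R_su(P) = log₂( ((aN + a_cΔ)(a_cN + aΔ) + a(a+a_c)(a_cN + aΔ)P) / ((aN + a_cΔ)(a_cN + aΔ) + a_c(a+a_c)(aN + a_cΔ)P) ), with Δ = √(N² + (a+a_c)NP), is strictly increasing in P. -/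
lemma aux8 (a ac N P : ℝ) (hac : 0 < ac) (ha : ac < a) (hN : 0 < N) (hP : 0 < P) :
    ((a * N + ac * Real.sqrt (N ^ 2 + (a + ac) * N * P)) *
        (ac * N + a * Real.sqrt (N ^ 2 + (a + ac) * N * P)) +
        a * (a + ac) * (ac * N + a * Real.sqrt (N ^ 2 + (a + ac) * N * P)) * P) /
      ((a * N + ac * Real.sqrt (N ^ 2 + (a + ac) * N * P)) *
        (ac * N + a * Real.sqrt (N ^ 2 + (a + ac) * N * P)) +
        ac * (a + ac) * (a * N + ac * Real.sqrt (N ^ 2 + (a + ac) * N * P)) * P) =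
    ((ac * N + a * Real.sqrt (N ^ 2 + (a + ac) * N * P)) /
      (a * N + ac * Real.sqrt (N ^ 2 + (a + ac) * N * P))) ^ 2 := by
  have ha0 : 0 < a := hac.trans ha
  set Δ := Real.sqrt (N ^ 2 + (a + ac) * N * P) with hΔ
  have hΔpos : 0 < Δ := Real.sqrt_pos.mpr (by positivity)
  have h1 : Δ ^ 2 = N ^ 2 + (a + ac) * N * P := Real.sq_sqrt (by positivity)
  have hA : 0 < a * N + ac * Δ := by positivity
  have hB : 0 < ac * N + a * Δ := by positivity
  have hden : 0 < (a * N + ac * Δ) * (ac * N + a * Δ) + ac * (a + ac) * (a * N + ac * Δ) * P := by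
    positivity
  rw [div_pow, div_eq_div_iff hden.ne' (by positivity)]
  linear_combination (-((a * N + ac * Δ) * (ac * N + a * Δ) * (a ^ 2 - ac ^ 2))) * h1

theorem stmt_8 (a ac N : ℝ) (hac : 0 < ac) (ha : ac < a) (hN : 0 < N) :
    StrictMonoOn
      (fun P : ℝ =>
        let Δ := Real.sqrt (N ^ 2 + (a + ac) * N * P)
        Real.logb 2 (((a * N + ac * Δ) * (ac * N + a * Δ) + a * (a + ac) * (ac * N + a * Δ) * P) /
          ((a * N + ac * Δ) * (ac * N + a * Δ) + ac * (a + ac) * (a * N + ac * Δ) * P)))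
      (Set.Ioi 0) := by
  have ha0 : 0 < a := hac.trans ha
  intro P1 hP1 P2 hP2 h12
  simp only [Set.mem_Ioi] at hP1 hP2
  dsimp only
  rw [aux8 a ac N P1 hac ha hN hP1, aux8 a ac N P2 hac ha hN hP2]
  set Δ1 := Real.sqrt (N ^ 2 + (a + ac) * N * P1) with hΔ1
  set Δ2 := Real.sqrt (N ^ 2 + (a + ac) * N * P2) with hΔ2
  have hΔ1pos : 0 < Δ1 := Real.sqrt_pos.mpr (by positivity)
  have hΔlt : Δ1 < Δ2 := by
    apply Real.sqrt_lt_sqrt (by positivity)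
    nlinarith [mul_pos (add_pos ha0 hac) hN]
  have hΔ2pos : 0 < Δ2 := hΔ1pos.trans hΔlt
  have hA1 : 0 < a * N + ac * Δ1 := by positivity
  have hA2 : 0 < a * N + ac * Δ2 := by positivity
  have hB1 : 0 < ac * N + a * Δ1 := by positivity
  have hr : (ac * N + a * Δ1) / (a * N + ac * Δ1) < (ac * N + a * Δ2) / (a * N + ac * Δ2) := by
    rw [div_lt_div_iff₀ hA1 hA2]
    nlinarith [mul_pos (mul_pos hN (sub_pos.mpr hΔlt))
      (mul_pos (sub_pos.mpr ha) (add_pos ha0 hac))]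
  apply Real.logb_lt_logb one_lt_two (by positivity)
  exact pow_lt_pow_left₀ hr (by positivity) (by norm_num)
end

section
/- For a > a_c > 0 and N > 0, let P_c = N(a − a_c)(a² + a_c² + 6a·a_c)/(a_c² + 3a·a_c)². Then the single-user secrecy rate R_su(P) evaluated at P = P_c satisfies R_su(P_c) = 2·log₂((a + a_c)²/(4·a·a_c)). -/
theorem stmt_9 (a ac N : ℝ) (hac : 0 < ac) (ha : ac < a) (hN : 0 < N) :
    let P := N * (a - ac) * (a ^ 2 + ac ^ 2 + 6 * a * ac) / (ac ^ 2 + 3 * a * ac) ^ 2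
    let Δ := Real.sqrt (N ^ 2 + (a + ac) * N * P)
    Real.logb 2 (((a * N + ac * Δ) * (ac * N + a * Δ) + a * (a + ac) * (ac * N + a * Δ) * P) /
        ((a * N + ac * Δ) * (ac * N + a * Δ) + ac * (a + ac) * (a * N + ac * Δ) * P)) =
      2 * Real.logb 2 ((a + ac) ^ 2 / (4 * a * ac)) := by
  intro P Δ
  have ha0 : 0 < a := hac.trans ha
  have hs : 0 < a - ac := sub_pos.2 ha
  have hPdef : P = N * (a - ac) * (a ^ 2 + ac ^ 2 + 6 * a * ac) / (ac ^ 2 + 3 * a * ac) ^ 2 := rfl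
  have hP : 0 < P := by rw [hPdef]; positivity
  have hD : Δ = N * a * (a + 3 * ac) / (ac * (3 * a + ac)) := by
    show Real.sqrt (N ^ 2 + (a + ac) * N * P) = _
    rw [show N ^ 2 + (a + ac) * N * P = (N * a * (a + 3 * ac) / (ac * (3 * a + ac))) ^ 2 by
      rw [hPdef]; field_simp; ring]
    exact Real.sqrt_sq (by positivity)
  have hΔ : 0 < Δ := by rw [hD]; positivity
  have hden : 0 < (a * N + ac * Δ) * (ac * N + a * Δ) + ac * (a + ac) * (a * N + ac * Δ) * P := by
    positivity
  have key : ((a * N + ac * Δ) * (ac * N + a * Δ) + a * (a + ac) * (ac * N + a * Δ) * P) /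
      ((a * N + ac * Δ) * (ac * N + a * Δ) + ac * (a + ac) * (a * N + ac * Δ) * P) =
      ((a + ac) ^ 2 / (4 * a * ac)) ^ 2 := by
    rw [div_eq_iff (ne_of_gt hden), hD, hPdef]
    field_simp
    ring
  rw [key, Real.logb_pow]
  norm_num
end

section
/- For a > a_c > 0, N > 0, if P > P_c = N(a − a_c)(a² + a_c² + 6a·a_c)/(a_c² + 3a·a_c)², then R_su(P) > 2·log₂((a + a_c)²/(4·a·a_c)); and if 0 < P < P_c then R_su(P) < 2·log₂((a + a_c)²/(4·a·a_c)). -/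
theorem stmt_10 (a ac N : ℝ) (hac : 0 < ac) (ha : ac < a) (hN : 0 < N) :
    let Pc := N * (a - ac) * (a ^ 2 + ac ^ 2 + 6 * a * ac) / (ac ^ 2 + 3 * a * ac) ^ 2
    let Rsu : ℝ → ℝ := fun P =>
      let Δ := Real.sqrt (N ^ 2 + (a + ac) * N * P)
      Real.logb 2 (((a * N + ac * Δ) * (ac * N + a * Δ) + a * (a + ac) * (ac * N + a * Δ) * P) /
        ((a * N + ac * Δ) * (ac * N + a * Δ) + ac * (a + ac) * (a * N + ac * Δ) * P))
    (∀ P : ℝ, Pc < P → 2 * Real.logb 2 ((a + ac) ^ 2 / (4 * a * ac)) < Rsu P) ∧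
      (∀ P : ℝ, 0 < P → P < Pc → Rsu P < 2 * Real.logb 2 ((a + ac) ^ 2 / (4 * a * ac))) := by
  intro Pc Rsu
  have ha0 : 0 < a := hac.trans ha
  have hq : 0 < (a + ac) ^ 2 / (4 * a * ac) := by positivity
  have key : ∀ P : ℝ, 0 < P →
      Rsu P = 2 * Real.logb 2 ((ac * N + a * Real.sqrt (N ^ 2 + (a + ac) * N * P)) /
        (a * N + ac * Real.sqrt (N ^ 2 + (a + ac) * N * P))) := by
    intro P hP
    simp only [Rsu]
    set Δ := Real.sqrt (N ^ 2 + (a + ac) * N * P) with hΔdef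
    have hΔsq : Δ ^ 2 = N ^ 2 + (a + ac) * N * P := Real.sq_sqrt (by positivity)
    have hΔpos : 0 < Δ := Real.sqrt_pos.mpr (by positivity)
    have hu : 0 < ac * N + a * Δ := by positivity
    have hv : 0 < a * N + ac * Δ := by positivity
    have hX : (a * N + ac * Δ) * (ac * N + a * Δ) + a * (a + ac) * (ac * N + a * Δ) * P
        = (ac * N + a * Δ) ^ 2 * Δ / N := by
      rw [eq_div_iff hN.ne']
      linear_combination (-(a * (ac * N + a * Δ))) * hΔsq
    have hY : (a * N + ac * Δ) * (ac * N + a * Δ) + ac * (a + ac) * (a * N + ac * Δ) * P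
        = (a * N + ac * Δ) ^ 2 * Δ / N := by
      rw [eq_div_iff hN.ne']
      linear_combination (-(ac * (a * N + ac * Δ))) * hΔsq
    rw [hX, hY]
    have hqq : ((ac * N + a * Δ) ^ 2 * Δ / N) / ((a * N + ac * Δ) ^ 2 * Δ / N)
        = ((ac * N + a * Δ) / (a * N + ac * Δ)) ^ 2 := by
      field_simp
    rw [hqq, Real.logb_pow]
    norm_num
  have hPcpos : 0 < Pc := by
    have h3 : 0 < a - ac := sub_pos.2 ha
    have h2 : 0 < a ^ 2 + ac ^ 2 + 6 * a * ac := by positivity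
    exact div_pos (mul_pos (mul_pos hN h3) h2) (by positivity)
  constructor
  · intro P hPgt
    have hP : 0 < P := hPcpos.trans hPgt
    rw [key P hP]
    set Δ := Real.sqrt (N ^ 2 + (a + ac) * N * P) with hΔdef
    have hΔsq : Δ ^ 2 = N ^ 2 + (a + ac) * N * P := Real.sq_sqrt (by positivity)
    have hΔpos : 0 < Δ := Real.sqrt_pos.mpr (by positivity)
    have hv : 0 < a * N + ac * Δ := by positivity
    have hp' : N * (a - ac) * (a ^ 2 + ac ^ 2 + 6 * a * ac) < P * (ac ^ 2 + 3 * a * ac) ^ 2 := by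
      have := hPgt
      simp only [Pc] at this
      exact (div_lt_iff₀ (by positivity)).mp this
    have hΔbig : a * (a + 3 * ac) * N < ac * (3 * a + ac) * Δ := by
      have hΔE : (ac * (3 * a + ac) * Δ) ^ 2
          = (ac * (3 * a + ac)) ^ 2 * (N ^ 2 + (a + ac) * N * P) := by
        linear_combination (ac * (3 * a + ac)) ^ 2 * hΔsq
      have h2 : (a * (a + 3 * ac) * N) ^ 2 < (ac * (3 * a + ac) * Δ) ^ 2 := by
        rw [hΔE]
        nlinarith [mul_pos (mul_pos (by linarith : (0:ℝ) < a + ac) hN)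
          (by linarith : (0:ℝ) < P * (ac ^ 2 + 3 * a * ac) ^ 2
            - N * (a - ac) * (a ^ 2 + ac ^ 2 + 6 * a * ac))]
      exact lt_of_pow_lt_pow_left₀ 2 (by positivity) h2
    have hfrac : (a + ac) ^ 2 / (4 * a * ac) < (ac * N + a * Δ) / (a * N + ac * Δ) := by
      rw [div_lt_div_iff₀ (by positivity) hv]
      nlinarith [mul_pos (sub_pos.2 ha)
        (by linarith : (0:ℝ) < ac * (3 * a + ac) * Δ - a * (a + 3 * ac) * N)]
    have := Real.logb_lt_logb (by norm_num : (1:ℝ) < 2) hq hfrac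
    linarith
  · intro P hP hPlt
    rw [key P hP]
    set Δ := Real.sqrt (N ^ 2 + (a + ac) * N * P) with hΔdef
    have hΔsq : Δ ^ 2 = N ^ 2 + (a + ac) * N * P := Real.sq_sqrt (by positivity)
    have hΔpos : 0 < Δ := Real.sqrt_pos.mpr (by positivity)
    have hu : 0 < ac * N + a * Δ := by positivity
    have hv : 0 < a * N + ac * Δ := by positivity
    have hp' : P * (ac ^ 2 + 3 * a * ac) ^ 2 < N * (a - ac) * (a ^ 2 + ac ^ 2 + 6 * a * ac) := by
      have := hPlt
      simp only [Pc] at this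
      exact (lt_div_iff₀ (by positivity)).mp this
    have hΔsmall : ac * (3 * a + ac) * Δ < a * (a + 3 * ac) * N := by
      have hΔE : (ac * (3 * a + ac) * Δ) ^ 2
          = (ac * (3 * a + ac)) ^ 2 * (N ^ 2 + (a + ac) * N * P) := by
        linear_combination (ac * (3 * a + ac)) ^ 2 * hΔsq
      have h2 : (ac * (3 * a + ac) * Δ) ^ 2 < (a * (a + 3 * ac) * N) ^ 2 := by
        rw [hΔE]
        nlinarith [mul_pos (mul_pos (by linarith : (0:ℝ) < a + ac) hN)
          (by linarith : (0:ℝ) < N * (a - ac) * (a ^ 2 + ac ^ 2 + 6 * a * ac)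
            - P * (ac ^ 2 + 3 * a * ac) ^ 2)]
      exact lt_of_pow_lt_pow_left₀ 2 (by positivity) h2
    have hfrac : (ac * N + a * Δ) / (a * N + ac * Δ) < (a + ac) ^ 2 / (4 * a * ac) := by
      rw [div_lt_div_iff₀ hv (by positivity)]
      nlinarith [mul_pos (sub_pos.2 ha)
        (by linarith : (0:ℝ) < a * (a + 3 * ac) * N - ac * (3 * a + ac) * Δ)]
    have := Real.logb_lt_logb (by norm_num : (1:ℝ) < 2) (by positivity) hfrac
    linarith
end

section
/- For a > a_c > 0, N > 0 and P with 0 < P < N(a − a_c)/(a_c(a + a_c)), the maximum of R(p,λ) = log₂( ((N + (a+a_c)p)(N + (a+a_c)λp)) / ((N + a_c p + a λ p)(N + a λ p + a_c p)) ) over p ∈ [0,P] and λ ∈ [0,1] is attained at λ = 0, p = P. -/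
theorem stmt_16 (a ac N P : ℝ) (hac : 0 < ac) (ha : ac < a) (hN : 0 < N)
    (hP : 0 < P) (hPc : P < N * (a - ac) / (ac * (a + ac))) :
    let R : ℝ → ℝ → ℝ := fun p lam =>
      Real.logb 2 (((N + (a + ac) * p) * (N + (a + ac) * lam * p)) /
        ((N + ac * p + a * lam * p) * (N + a * lam * p + ac * p)))
    ∀ p lam : ℝ, 0 ≤ p → p ≤ P → 0 ≤ lam → lam ≤ 1 → R p lam ≤ R P 0 := by
  intro R p lam hp hpP hlam hlam1
  have ha0 : 0 < a := hac.trans ha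
  have hden : 0 < ac * (a + ac) := by positivity
  have hKP : ac * (a + ac) * P < N * (a - ac) := by
    rwa [lt_div_iff₀ hden, mul_comm] at hPc
  have hKp : ac * (a + ac) * p ≤ N * (a - ac) := by nlinarith
  have hlp : 0 ≤ lam * p := mul_nonneg hlam hp
  have hd1 : 0 < N + ac * p + a * lam * p := by nlinarith
  have hd1' : 0 < N + ac * p := by nlinarith
  have hdP : 0 < N + ac * P := by nlinarith
  have hn2 : 0 < N + (a + ac) * p := by nlinarith
  have hn2' : 0 < N + (a + ac) * lam * p := by nlinarith
  have hnP : 0 < N + (a + ac) * P := by nlinarith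
  have step1 : (N + (a + ac) * lam * p) * (N + ac * p) ^ 2 ≤
      N * (N + ac * p + a * lam * p) ^ 2 := by
    have hid : N * (N + ac * p + a * lam * p) ^ 2 -
        (N + (a + ac) * lam * p) * (N + ac * p) ^ 2 =
        lam * p * ((N + ac * p) * (N * (a - ac) - ac * (a + ac) * p) +
          N * a ^ 2 * (lam * p)) := by ring
    have h1 : 0 ≤ lam * p * ((N + ac * p) * (N * (a - ac) - ac * (a + ac) * p) +
        N * a ^ 2 * (lam * p)) := by
      apply mul_nonneg hlp
      have : (0:ℝ) ≤ N * (a - ac) - ac * (a + ac) * p := by linarith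
      have h2 : 0 ≤ (N + ac * p) * (N * (a - ac) - ac * (a + ac) * p) :=
        mul_nonneg hd1'.le this
      nlinarith [mul_nonneg (mul_nonneg hN.le (sq_nonneg a)) hlp]
    linarith [hid ▸ h1]
  have step2 : (N + (a + ac) * p) * (N + ac * P) ^ 2 ≤
      (N + (a + ac) * P) * (N + ac * p) ^ 2 := by
    have hPp : (0:ℝ) ≤ P - p := sub_nonneg.2 hpP
    have hid : (N + (a + ac) * P) * (N + ac * p) ^ 2 -
        (N + (a + ac) * p) * (N + ac * P) ^ 2 =
        (P - p) * (N * (N * (a - ac) - ac * (a + ac) * P) +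
          ac * P * (N * (a - ac) - ac * (a + ac) * p) + N * ac ^ 2 * (P - p)) := by ring
    have h1 : 0 ≤ (P - p) * (N * (N * (a - ac) - ac * (a + ac) * P) +
        ac * P * (N * (a - ac) - ac * (a + ac) * p) + N * ac ^ 2 * (P - p)) := by
      apply mul_nonneg hPp
      have t1 : 0 ≤ N * (N * (a - ac) - ac * (a + ac) * P) :=
        mul_nonneg hN.le (by linarith)
      have t2 : 0 ≤ ac * P * (N * (a - ac) - ac * (a + ac) * p) :=
        mul_nonneg (mul_nonneg hac.le hP.le) (by linarith)
      have t3 : 0 ≤ N * ac ^ 2 * (P - p) :=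
        mul_nonneg (mul_nonneg hN.le (sq_nonneg ac)) hPp
      linarith
    linarith [hid ▸ h1]
  -- fraction chain
  have hx : (0:ℝ) < (N + (a + ac) * p) * (N + (a + ac) * lam * p) /
      ((N + ac * p + a * lam * p) * (N + a * lam * p + ac * p)) := by
    apply div_pos (mul_pos hn2 hn2')
    nlinarith [mul_pos hd1 hd1]
  have hxy : (N + (a + ac) * p) * (N + (a + ac) * lam * p) /
      ((N + ac * p + a * lam * p) * (N + a * lam * p + ac * p)) ≤
      (N + (a + ac) * p) * N / ((N + ac * p) * (N + ac * p)) := by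
    rw [div_le_div_iff₀ (by nlinarith [mul_pos hd1 hd1]) (by positivity)]
    calc (N + (a + ac) * p) * (N + (a + ac) * lam * p) * ((N + ac * p) * (N + ac * p))
        = (N + (a + ac) * p) * ((N + (a + ac) * lam * p) * (N + ac * p) ^ 2) := by ring
      _ ≤ (N + (a + ac) * p) * (N * (N + ac * p + a * lam * p) ^ 2) :=
          mul_le_mul_of_nonneg_left step1 hn2.le
      _ = (N + (a + ac) * p) * N *
          ((N + ac * p + a * lam * p) * (N + a * lam * p + ac * p)) := by ring
  have hyz : (N + (a + ac) * p) * N / ((N + ac * p) * (N + ac * p)) ≤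
      (N + (a + ac) * P) * N / ((N + ac * P) * (N + ac * P)) := by
    rw [div_le_div_iff₀ (by positivity) (by positivity)]
    calc (N + (a + ac) * p) * N * ((N + ac * P) * (N + ac * P))
        = N * ((N + (a + ac) * p) * (N + ac * P) ^ 2) := by ring
      _ ≤ N * ((N + (a + ac) * P) * (N + ac * p) ^ 2) :=
          mul_le_mul_of_nonneg_left step2 hN.le
      _ = (N + (a + ac) * P) * N * ((N + ac * p) * (N + ac * p)) := by ring
  have hgoal : (N + (a + ac) * p) * (N + (a + ac) * lam * p) /
      ((N + ac * p + a * lam * p) * (N + a * lam * p + ac * p)) ≤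
      (N + (a + ac) * P) * (N + (a + ac) * 0 * P) /
      ((N + ac * P + a * 0 * P) * (N + a * 0 * P + ac * P)) := by
    have : (N + (a + ac) * P) * (N + (a + ac) * 0 * P) /
        ((N + ac * P + a * 0 * P) * (N + a * 0 * P + ac * P)) =
        (N + (a + ac) * P) * N / ((N + ac * P) * (N + ac * P)) := by ring_nf
    rw [this]
    exact hxy.trans hyz
  exact Real.logb_le_logb_of_le (by norm_num) hx hgoal
end

section
/- For a > a_c > 0, N > 0, P > 0, λ* ∈ (0, a_c/a) with p* = N(a − a_c)/((a + a_c)(a_c − a λ*)) ≤ P: the partial derivative of R₁ˢ with respect to p₁ at the symmetric point (p₁ = p₂ = p*, λ₁ = λ₂ = λ*) is positive, while the partial derivative of R₂ˢ with respect to p₁ at the same point is negative, where R₁ˢ and R₂ˢ are given by (2a)–(2b). -/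
lemma hasDeriv_logb_affine (c d x : ℝ) (h : 0 < c + d * x) :
    HasDerivAt (fun y : ℝ => Real.logb 2 (c + d * y)) (d / ((c + d * x) * Real.log 2)) x := by
  have h1 : HasDerivAt (fun y : ℝ => c + d * y) d x := by
    simpa using ((hasDerivAt_id x).const_mul d).const_add c
  have h2 := ((Real.hasDerivAt_log h.ne').comp x h1).div_const (Real.log 2)
  simp only [Real.logb]
  refine h2.congr_deriv ?_
  rw [div_mul_eq_div_div]; ring

set_option maxHeartbeats 1000000 in
theorem stmt_17 (a ac N P lam : ℝ) (hac : 0 < ac) (ha : ac < a) (hN : 0 < N)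
    (hP : 0 < P) (hlam : 0 < lam) (hlam' : lam < ac / a)
    (hppow : N * (a - ac) / ((a + ac) * (ac - a * lam)) ≤ P) :
    let pstar := N * (a - ac) / ((a + ac) * (ac - a * lam))
    (0 < deriv (fun p1 : ℝ =>
        Real.logb 2 (1 + a * (1 - lam) * p1 / (N + ac * pstar + a * lam * p1)) -
          Real.logb 2 (1 + ac * (1 - lam) * p1 / (N + ac * lam * p1 + a * lam * pstar))) pstar) ∧
      (deriv (fun p1 : ℝ =>
        Real.logb 2 (1 + a * (1 - lam) * pstar / (N + ac * p1 + a * lam * pstar)) -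
          Real.logb 2 (1 + ac * (1 - lam) * pstar / (N + ac * lam * pstar + a * lam * p1))) pstar < 0) := by
  intro p
  have hp_def : p = N * (a - ac) / ((a + ac) * (ac - a * lam)) := rfl
  clear_value p
  have ha0 : 0 < a := hac.trans ha
  have hal : a * lam < ac := by
    have := (lt_div_iff₀ ha0).mp hlam'; linarith [this]
  have hlam1 : lam < 1 := by
    have h1 : ac / a < 1 := (div_lt_one ha0).mpr ha; linarith
  have h1l : 0 < 1 - lam := by linarith
  have hsub : 0 < ac - a * lam := by linarith
  have hsub2 : 0 < a - ac := by linarith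
  have hden : 0 < (a + ac) * (ac - a * lam) := mul_pos (by linarith) hsub
  have hp : 0 < p := by
    rw [hp_def]; exact div_pos (mul_pos hN hsub2) hden
  have hamc : a - ac ≠ 0 := sub_ne_zero.mpr (ne_of_gt ha)
  have hNval : N = (a + ac) * (ac - a * lam) * p / (a - ac) := by
    rw [hp_def]; field_simp
  have hL : 0 < Real.log 2 := Real.log_pos (by norm_num)
  have hE1 : 0 < N + ac * p + a * p := by positivity
  have hE2 : 0 < N + ac * p + a * lam * p := by positivity
  have hE2' : 0 < N + a * lam * p + ac * p := by positivity
  have hE4 : 0 < N + a * lam * p + ac * lam * p := by positivity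
  have hG1 : 0 < N + a * p + ac * p := by positivity
  have hG2 : 0 < N + a * lam * p + ac * p := by positivity
  have hG3 : 0 < N + ac * p + a * lam * p := by positivity
  have hG4 : 0 < N + ac * lam * p + a * lam * p := by positivity
  have hR : 0 < p ^ 2 * (1 - lam) ^ 2 * a * ac * (a - ac) * (a + ac) * (ac - a * lam) :=
    mul_pos (mul_pos (mul_pos (mul_pos (mul_pos (mul_pos (pow_pos hp 2) (pow_pos h1l 2)) ha0)
      hac) hsub2) (by linarith : (0:ℝ) < a + ac)) hsub
  constructor
  · -- first derivative positive
    have hD1 := hasDeriv_logb_affine (N + ac * p) a p hE1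
    have hD2 := hasDeriv_logb_affine (N + ac * p) (a * lam) p hE2
    have hD3 := hasDeriv_logb_affine (N + a * lam * p) ac p hE2'
    have hD4 := hasDeriv_logb_affine (N + a * lam * p) (ac * lam) p hE4
    have hF := (hD1.sub hD2).sub (hD3.sub hD4)
    have heq1 : (fun p1 : ℝ =>
        Real.logb 2 (1 + a * (1 - lam) * p1 / (N + ac * p + a * lam * p1)) -
          Real.logb 2 (1 + ac * (1 - lam) * p1 / (N + ac * lam * p1 + a * lam * p)))
        =ᶠ[nhds p] (fun p1 : ℝ =>
        (Real.logb 2 (N + ac * p + a * p1) - Real.logb 2 (N + ac * p + a * lam * p1)) -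
        (Real.logb 2 (N + a * lam * p + ac * p1) -
          Real.logb 2 (N + a * lam * p + ac * lam * p1))) := by
      filter_upwards [isOpen_Ioi.mem_nhds hp] with x hx
      have hx0 : (0:ℝ) < x := hx
      have v1 : 0 < N + ac * p + a * lam * x := by positivity
      have v2 : 0 < N + ac * lam * x + a * lam * p := by positivity
      have w1 : 0 < N + ac * p + a * x := by positivity
      have w3 : 0 < N + a * lam * p + ac * x := by positivity
      have w4 : 0 < N + a * lam * p + ac * lam * x := by positivity
      have e1 : 1 + a * (1 - lam) * x / (N + ac * p + a * lam * x)
          = (N + ac * p + a * x) / (N + ac * p + a * lam * x) := by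
        field_simp; ring
      have e2 : 1 + ac * (1 - lam) * x / (N + ac * lam * x + a * lam * p)
          = (N + a * lam * p + ac * x) / (N + a * lam * p + ac * lam * x) := by
        field_simp
        ring
      rw [e1, e2, Real.logb_div w1.ne' v1.ne', Real.logb_div w3.ne' w4.ne']
    have hderiv1 : deriv (fun p1 : ℝ =>
        Real.logb 2 (1 + a * (1 - lam) * p1 / (N + ac * p + a * lam * p1)) -
          Real.logb 2 (1 + ac * (1 - lam) * p1 / (N + ac * lam * p1 + a * lam * p))) p
        = a / ((N + ac * p + a * p) * Real.log 2)
          - a * lam / ((N + ac * p + a * lam * p) * Real.log 2)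
          - (ac / ((N + a * lam * p + ac * p) * Real.log 2)
          - ac * lam / ((N + a * lam * p + ac * lam * p) * Real.log 2)) := by
      rw [heq1.deriv_eq]; exact hF.deriv
    have hX : 0 < a * ((N + ac * p + a * lam * p) * (N + a * lam * p + ac * lam * p))
        - (a * lam + ac) * ((N + ac * p + a * p) * (N + a * lam * p + ac * lam * p))
        + ac * lam * ((N + ac * p + a * p) * (N + ac * p + a * lam * p)) := by
      have hid : (a * ((N + ac * p + a * lam * p) * (N + a * lam * p + ac * lam * p))
          - (a * lam + ac) * ((N + ac * p + a * p) * (N + a * lam * p + ac * lam * p))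
          + ac * lam * ((N + ac * p + a * p) * (N + ac * p + a * lam * p))) * (a - ac) ^ 2
          = p ^ 2 * (1 - lam) ^ 2 * a * ac * (a - ac) * (a + ac) * (ac - a * lam) := by
        rw [hNval]; field_simp; ring
      nlinarith [hid, hR, pow_pos hsub2 2]
    rw [hderiv1]
    have goal_eq : a / ((N + ac * p + a * p) * Real.log 2)
          - a * lam / ((N + ac * p + a * lam * p) * Real.log 2)
          - (ac / ((N + a * lam * p + ac * p) * Real.log 2)
          - ac * lam / ((N + a * lam * p + ac * lam * p) * Real.log 2))
        = (a * ((N + ac * p + a * lam * p) * (N + a * lam * p + ac * lam * p))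
          - (a * lam + ac) * ((N + ac * p + a * p) * (N + a * lam * p + ac * lam * p))
          + ac * lam * ((N + ac * p + a * p) * (N + ac * p + a * lam * p)))
          / ((N + ac * p + a * p) * (N + ac * p + a * lam * p)
            * (N + a * lam * p + ac * lam * p) * Real.log 2) := by
      field_simp
      ring
    rw [goal_eq]
    exact div_pos hX (mul_pos (mul_pos (mul_pos hE1 hE2) hE4) hL)
  · -- second derivative negative
    have hD1 := hasDeriv_logb_affine (N + a * p) ac p hG1
    have hD2 := hasDeriv_logb_affine (N + a * lam * p) ac p hG2
    have hD3 := hasDeriv_logb_affine (N + ac * p) (a * lam) p hG3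
    have hD4 := hasDeriv_logb_affine (N + ac * lam * p) (a * lam) p hG4
    have hF := (hD1.sub hD2).sub (hD3.sub hD4)
    have heq2 : (fun p1 : ℝ =>
        Real.logb 2 (1 + a * (1 - lam) * p / (N + ac * p1 + a * lam * p)) -
          Real.logb 2 (1 + ac * (1 - lam) * p / (N + ac * lam * p + a * lam * p1)))
        =ᶠ[nhds p] (fun p1 : ℝ =>
        (Real.logb 2 (N + a * p + ac * p1) - Real.logb 2 (N + a * lam * p + ac * p1)) -
        (Real.logb 2 (N + ac * p + a * lam * p1) -
          Real.logb 2 (N + ac * lam * p + a * lam * p1))) := by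
      filter_upwards [isOpen_Ioi.mem_nhds hp] with x hx
      have hx0 : (0:ℝ) < x := hx
      have v1 : 0 < N + ac * x + a * lam * p := by positivity
      have v2 : 0 < N + ac * lam * p + a * lam * x := by positivity
      have w1 : 0 < N + a * p + ac * x := by positivity
      have w2 : 0 < N + a * lam * p + ac * x := by positivity
      have w3 : 0 < N + ac * p + a * lam * x := by positivity
      have e1 : 1 + a * (1 - lam) * p / (N + ac * x + a * lam * p)
          = (N + a * p + ac * x) / (N + a * lam * p + ac * x) := by
        field_simp
        ring
      have e2 : 1 + ac * (1 - lam) * p / (N + ac * lam * p + a * lam * x)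
          = (N + ac * p + a * lam * x) / (N + ac * lam * p + a * lam * x) := by
        field_simp; ring
      rw [e1, e2, Real.logb_div w1.ne' w2.ne', Real.logb_div w3.ne' v2.ne']
    have hderiv2 : deriv (fun p1 : ℝ =>
        Real.logb 2 (1 + a * (1 - lam) * p / (N + ac * p1 + a * lam * p)) -
          Real.logb 2 (1 + ac * (1 - lam) * p / (N + ac * lam * p + a * lam * p1))) p
        = ac / ((N + a * p + ac * p) * Real.log 2)
          - ac / ((N + a * lam * p + ac * p) * Real.log 2)
          - (a * lam / ((N + ac * p + a * lam * p) * Real.log 2)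
          - a * lam / ((N + ac * lam * p + a * lam * p) * Real.log 2)) := by
      rw [heq2.deriv_eq]; exact hF.deriv
    have hY : ac * ((N + a * lam * p + ac * p) * (N + ac * lam * p + a * lam * p))
        - (ac + a * lam) * ((N + a * p + ac * p) * (N + ac * lam * p + a * lam * p))
        + a * lam * ((N + a * p + ac * p) * (N + a * lam * p + ac * p)) < 0 := by
      have hid : (ac * ((N + a * lam * p + ac * p) * (N + ac * lam * p + a * lam * p))
          - (ac + a * lam) * ((N + a * p + ac * p) * (N + ac * lam * p + a * lam * p))
          + a * lam * ((N + a * p + ac * p) * (N + a * lam * p + ac * p))) * (a - ac) ^ 2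
          = -(p ^ 2 * (1 - lam) ^ 2 * a * ac * (a - ac) * (a + ac) * (ac - a * lam)) := by
        rw [hNval]; field_simp; ring
      nlinarith [hid, hR, pow_pos hsub2 2]
    rw [hderiv2]
    have goal_eq : ac / ((N + a * p + ac * p) * Real.log 2)
          - ac / ((N + a * lam * p + ac * p) * Real.log 2)
          - (a * lam / ((N + ac * p + a * lam * p) * Real.log 2)
          - a * lam / ((N + ac * lam * p + a * lam * p) * Real.log 2))
        = (ac * ((N + a * lam * p + ac * p) * (N + ac * lam * p + a * lam * p))
          - (ac + a * lam) * ((N + a * p + ac * p) * (N + ac * lam * p + a * lam * p))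
          + a * lam * ((N + a * p + ac * p) * (N + a * lam * p + ac * p)))
          / ((N + a * p + ac * p) * (N + a * lam * p + ac * p)
            * (N + ac * lam * p + a * lam * p) * Real.log 2) := by
      field_simp
      ring
    rw [goal_eq]
    exact div_neg_of_neg_of_pos hY (mul_pos (mul_pos (mul_pos hG1 hG2) hG4) hL)
end

section
/- Let a > a_c > 0, N > 0, P > 0. Define the no-artificial-noise single-user rate R̃(p₂) = log₂(1 + aP/(N + a_c p₂)) − log₂(1 + a_c P/(N + a p₂)) maximized over p₂ ∈ [0,P] when the helper sends artificial noise (λ₂ = 1) versus R₀ = log₂(1 + aP/N) − log₂(1 + a_c P/N) when the helper is silent (p₂ = 0). Then the optimal artificial-noise rate satisfies R̃(p₂*) ≥ R₀ with strict inequality whenever p₂* = (√(N² + (a+a_c)NP) − N)/(a + a_c) > 0. -/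
theorem stmt_19 (a ac N P : ℝ) (hac : 0 < ac) (ha : ac < a) (hN : 0 < N) (hP : 0 < P) :
    let f : ℝ → ℝ := fun p2 =>
      Real.logb 2 (1 + a * P / (N + ac * p2)) - Real.logb 2 (1 + ac * P / (N + a * p2))
    let p2star := (Real.sqrt (N ^ 2 + (a + ac) * N * P) - N) / (a + ac)
    f 0 ≤ f p2star ∧ (0 < p2star → f 0 < f p2star) := by
  intro f p2star
  have ha0 : 0 < a := hac.trans ha
  have hq0 : 0 < a + ac := by linarith
  set q : ℝ := a + ac with hq
  set s : ℝ := Real.sqrt (N ^ 2 + q * N * P) with hs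
  have hnn : (0:ℝ) ≤ N ^ 2 + q * N * P := by positivity
  have hs2 : s ^ 2 = N ^ 2 + q * N * P := Real.sq_sqrt hnn
  have hNs : N < s := by
    rw [hs]
    exact (Real.lt_sqrt hN.le).mpr (by nlinarith [mul_pos (mul_pos hq0 hN) hP])
  have hs0 : 0 < s := hN.trans hNs
  have hp : p2star = (s - N) / q := rfl
  have hp0 : 0 < p2star := by
    rw [hp]; exact div_pos (sub_pos.mpr hNs) hq0
  have hd1 : N + ac * p2star = (a * N + ac * s) / q := by
    rw [hp]; field_simp; ring
  have hd2 : N + a * p2star = (ac * N + a * s) / q := by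
    rw [hp]; field_simp; ring
  have hD1 : 0 < a * N + ac * s := by positivity
  have hD2 : 0 < ac * N + a * s := by positivity
  have hPq : 0 < N + P * q := by positivity
  have hkey : 2 * N * (N + P * q) < s * (2 * N + P * q) := by
    have h1 : (s * (2 * N + P * q)) ^ 2 - (2 * N * (N + P * q)) ^ 2
        = N * (N + P * q) * (P * q) ^ 2 := by
      linear_combination (2 * N + P * q) ^ 2 * hs2
    have h3 : 0 < N * (N + P * q) * (P * q) ^ 2 := by positivity
    have hsq : (2 * N * (N + P * q)) ^ 2 < (s * (2 * N + P * q)) ^ 2 := by linarith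
    exact lt_of_pow_lt_pow_left₀ 2 (by positivity) hsq
  -- main product inequality
  have hmain : (1 + a * P / N) * (1 + ac * P / (N + a * p2star))
      < (1 + a * P / (N + ac * p2star)) * (1 + ac * P / N) := by
    rw [hd1, hd2]
    have e1 : 1 + a * P / N = (N + a * P) / N := by field_simp
    have e2 : 1 + ac * P / ((ac * N + a * s) / q)
        = (ac * N + a * s + ac * P * q) / (ac * N + a * s) := by
      rw [div_div_eq_mul_div]
      field_simp
    have e3 : 1 + a * P / ((a * N + ac * s) / q)
        = (a * N + ac * s + a * P * q) / (a * N + ac * s) := by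
      rw [div_div_eq_mul_div]
      field_simp
    have e4 : 1 + ac * P / N = (N + ac * P) / N := by field_simp
    rw [e1, e2, e3, e4, div_mul_div_comm, div_mul_div_comm,
      div_lt_div_iff₀ (by positivity) (by positivity)]
    have hz : s ^ 2 - (N ^ 2 + q * N * P) = 0 := by rw [hs2]; ring
    have hident : (a * N + ac * s + a * P * q) * (N + ac * P) * (N * (ac * N + a * s))
        - (N + a * P) * (ac * N + a * s + ac * P * q) * ((a * N + ac * s) * N)
        = a * ac * P * (a - ac) * N * (s * (2 * N + P * q) - 2 * N * (N + P * q))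
          + a * ac * N * P * (ac - a) * (s ^ 2 - (N ^ 2 + q * N * P)) := by ring
    have h1 : 0 < s * (2 * N + P * q) - 2 * N * (N + P * q) := sub_pos.mpr hkey
    have h2 : 0 < a - ac := sub_pos.mpr ha
    nlinarith [hident, hz, mul_pos (mul_pos (mul_pos (mul_pos (mul_pos ha0 hac) hP) h2) hN) h1]
  have hA0 : 0 < 1 + a * P / N := by positivity
  have hB0 : 0 < 1 + ac * P / N := by positivity
  have hA : 0 < 1 + a * P / (N + ac * p2star) := by
    rw [hd1]; positivity
  have hB : 0 < 1 + ac * P / (N + a * p2star) := by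
    rw [hd2]; positivity
  have hlog : Real.logb 2 ((1 + a * P / N) * (1 + ac * P / (N + a * p2star)))
      < Real.logb 2 ((1 + a * P / (N + ac * p2star)) * (1 + ac * P / N)) :=
    Real.logb_lt_logb (by norm_num) (mul_pos hA0 hB) hmain
  rw [Real.logb_mul (ne_of_gt hA0) (ne_of_gt hB),
    Real.logb_mul (ne_of_gt hA) (ne_of_gt hB0)] at hlog
  have hstrict : f 0 < f p2star := by
    show Real.logb 2 (1 + a * P / (N + ac * 0)) - Real.logb 2 (1 + ac * P / (N + a * 0))
        < Real.logb 2 (1 + a * P / (N + ac * p2star)) - Real.logb 2 (1 + ac * P / (N + a * p2star))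
    simp only [mul_zero, add_zero]
    linarith
  exact ⟨le_of_lt hstrict, fun _ => hstrict⟩
end
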